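/- arXiv:2006.03578 — 6 statements merged into one kernel-verified Lean document; each statement's English description precedes it below -/
import Mathlib

section
/- Let G be a (2P_2, \overline{P_2+P_3})-free, C_5-free atom containing an induced 4-cycle on vertices v_1,…,v_4. Then for every i ∈ {1,…,4} (indices modulo 4), the set V_∅ ∪ V_{{i}} ∪ V_{{i+1}} ∪ V_{{i,i+1}} is an independent set of G. -/
open SimpleGraph

/-- The graph `2P₂`: two disjoint edges, on vertex set `Fin 4`. -/
def twoP2 : SimpleGraph (Fin 4) :=
  SimpleGraph.fromRel (fun a b => (a = 0 ∧ b = 1) ∨ (a = 2 ∧ b = 3))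

/-- The graph `P₂ + P₃`: disjoint union of a path on 2 vertices (0-1)
and a path on 3 vertices (2-3-4), on vertex set `Fin 5`. -/
def P2P3 : SimpleGraph (Fin 5) :=
  SimpleGraph.fromRel (fun a b => (a = 0 ∧ b = 1) ∨ (a = 2 ∧ b = 3) ∨ (a = 3 ∧ b = 4))

/-- `G` is `H`-free: `G` contains no induced subgraph isomorphic to `H`. -/
def Free {W V : Type*} (H : SimpleGraph W) (G : SimpleGraph V) : Prop :=
  IsEmpty (H ↪g G)

/-- `G` has no clique cut-set: for every clique `K`, deleting the vertices of `K`
does not disconnect the graph.  A graph with this property is called an atom. -/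
def NoCliqueCutset {V : Type*} (G : SimpleGraph V) : Prop :=
  ∀ K : Set V, G.IsClique K → (G.induce (Kᶜ : Set V)).Preconnected

/-- The 5-cycle `C₅` on vertex set `Fin 5`. -/
def C5 : SimpleGraph (Fin 5) :=
  SimpleGraph.fromRel (fun a b => b = a + 1)

/-- For `S ⊆ Fin 4`, the set of vertices `x` outside the cycle `v 0, …, v 3` whose
neighbourhood on the cycle is exactly `{v i : i ∈ S}`. -/
def vSet {V : Type*} (G : SimpleGraph V) (v : Fin 4 → V) (S : Set (Fin 4)) : Set V :=
  {x | (∀ i, x ≠ v i) ∧ ∀ i, (G.Adj x (v i) ↔ i ∈ S)}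

/-!
Every vertex of `V_∅ ∪ V_{i} ∪ V_{i+1} ∪ V_{i,i+1}` misses both `v (i+2)` and `v (i+3)`, which are
adjacent; so an edge inside that set would, together with the edge `v (i+2) v (i+3)`, induce a `2P₂`.
-/

theorem adj_between_of_free_twoP2 {V : Type*} {G : SimpleGraph V} (h : _root_.Free twoP2 G)
    {x y a b : V} (hxy : G.Adj x y) (hab : G.Adj a b) :
    G.Adj x a ∨ G.Adj x b ∨ G.Adj y a ∨ G.Adj y b := by
  by_contra! ⟨hxa, hxb, hya, hyb⟩
  have hinj : Function.Injective ![x, y, a, b] := by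
    intro p q hpq
    fin_cases p <;> fin_cases q <;> simp_all [G.adj_comm]
  refine h.false ⟨⟨![x, y, a, b], hinj⟩, fun {p q} => ?_⟩
  fin_cases p <;> fin_cases q <;> simp [twoP2, G.adj_comm, hxy, hab, hxa, hxb, hya, hyb]

theorem not_adj_of_mem_vSet {V : Type*} {G : SimpleGraph V} {v : Fin 4 → V} {S : Set (Fin 4)}
    {x : V} (hx : x ∈ vSet G v S) {j : Fin 4} (hj : j ∉ S) : ¬G.Adj x (v j) :=
  fun h => hj ((hx.2 j).1 h)

theorem clm_C4_V0_V1_V2_V12_indep_general {V : Type*} (G : SimpleGraph V)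
    (hfree1 : _root_.Free twoP2 G)
    (v : Fin 4 → V)
    (hC : ∀ i j : Fin 4, G.Adj (v i) (v j) ↔ (j = i + 1 ∨ i = j + 1)) :
    ∀ i : Fin 4,
      ∀ x ∈ vSet G v ∅ ∪ vSet G v {i} ∪ vSet G v {i + 1} ∪ vSet G v {i, i + 1},
      ∀ y ∈ vSet G v ∅ ∪ vSet G v {i} ∪ vSet G v {i + 1} ∪ vSet G v {i, i + 1},
      x ≠ y → ¬ G.Adj x y := by
  intro i
  have hfar : ∀ z ∈ vSet G v ∅ ∪ vSet G v {i} ∪ vSet G v {i + 1} ∪ vSet G v {i, i + 1},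
      ¬G.Adj z (v (i + 2)) ∧ ¬G.Adj z (v (i + 3)) := by
    have hoff : ∀ k : Fin 4, k + 2 ≠ k ∧ k + 2 ≠ k + 1 ∧ k + 3 ≠ k ∧ k + 3 ≠ k + 1 := by decide
    rintro z (((hz | hz) | hz) | hz) <;>
      exact ⟨not_adj_of_mem_vSet hz (by simp [hoff i]), not_adj_of_mem_vSet hz (by simp [hoff i])⟩
  have hopp : G.Adj (v (i + 2)) (v (i + 3)) := (hC _ _).2 (Or.inl (by rw [add_assoc]; rfl))
  intro x hx y hy _ hxy
  obtain ⟨hx2, hx3⟩ := hfar x hx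
  obtain ⟨hy2, hy3⟩ := hfar y hy
  rcases adj_between_of_free_twoP2 hfree1 hxy hopp with h | h | h | h
  exacts [hx2 h, hx3 h, hy2 h, hy3 h]

theorem clm_C4_V0_V1_V2_V12_indep {V : Type*} [Fintype V] (G : SimpleGraph V)
    (hfree1 : _root_.Free twoP2 G) (hfree2 : _root_.Free (P2P3ᶜ) G) (hfree3 : _root_.Free C5 G)
    (hatom : NoCliqueCutset G)
    (v : Fin 4 → V) (hv : Function.Injective v)
    (hC : ∀ i j : Fin 4, G.Adj (v i) (v j) ↔ (j = i + 1 ∨ i = j + 1)) :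
    ∀ i : Fin 4,
      ∀ x ∈ vSet G v ∅ ∪ vSet G v {i} ∪ vSet G v {i + 1} ∪ vSet G v {i, i + 1},
      ∀ y ∈ vSet G v ∅ ∪ vSet G v {i} ∪ vSet G v {i + 1} ∪ vSet G v {i, i + 1},
      x ≠ y → ¬ G.Adj x y :=
  clm_C4_V0_V1_V2_V12_indep_general G hfree1 v hC
end

section
/- Let G be a (2P_2, \overline{P_2+P_3})-free, C_5-free atom containing an induced 4-cycle on vertices v_1,…,v_4. Then for every i ∈ {1,…,4} (indices modulo 4), both V_{{i,i+1}} ∪ V_{{i,i+2}} and V_{{i,i+1}} ∪ V_{{i+1,i+3}} are independent sets of G. -/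
/-!
Two adjacent vertices `x, y` of `V_{i,i+1} ∪ V_{i,i+2}` would induce, together with the cycle, a
forbidden graph: if both lie in `V_{i,i+1}` then `xy` and `v_{i+2}v_{i+3}` form a `2P₂`; otherwise
one of them, say `x`, lies in `V_{i,i+2}` and the five vertices `x, y, v_i, v_{i+1}, v_{i+2}`
induce the complement of `P₂ + P₃`. The second set is the first one for the relabelled cycle
`v_{i+1} v_i v_{i+3} v_{i+2}`.
-/

open SimpleGraph

section

variable {V W : Type*} {G : SimpleGraph V} {H : SimpleGraph W} {a b c d e : V}

lemma Free.false_of_adj_iff (h : _root_.Free H G) {f : W → V} (hf : f.Injective)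
    (hadj : ∀ s t, G.Adj (f s) (f t) ↔ H.Adj s t) : False :=
  h.false ⟨⟨f, hf⟩, hadj _ _⟩

lemma Free.false_of_twoP2 (h : _root_.Free twoP2 G) (hab : G.Adj a b) (hcd : G.Adj c d)
    (hac : ¬G.Adj a c) (had : ¬G.Adj a d) (hbc : ¬G.Adj b c) (hbd : ¬G.Adj b d)
    (hac' : a ≠ c) (had' : a ≠ d) (hbc' : b ≠ c) (hbd' : b ≠ d) : False := by
  refine h.false_of_adj_iff (f := ![a, b, c, d]) ?_ ?_
  · intro s t hst
    have := hab.ne; have := hcd.ne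
    fin_cases s <;> fin_cases t <;> simp_all [eq_comm]
  · intro s t
    fin_cases s <;> fin_cases t <;> simp [twoP2, *, G.adj_comm]

lemma Free.false_of_compl_P2P3 (h : _root_.Free P2P3ᶜ G)
    (hab : ¬G.Adj a b) (hcd : ¬G.Adj c d) (hde : ¬G.Adj d e)
    (hac : G.Adj a c) (had : G.Adj a d) (hae : G.Adj a e)
    (hbc : G.Adj b c) (hbd : G.Adj b d) (hbe : G.Adj b e) (hce : G.Adj c e)
    (hab' : a ≠ b) (hcd' : c ≠ d) (hde' : d ≠ e) : False := by
  refine h.false_of_adj_iff (f := ![a, b, c, d, e]) ?_ ?_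
  · intro s t hst
    have := hac.ne; have := had.ne; have := hae.ne; have := hbc.ne; have := hbd.ne
    have := hbe.ne; have := hce.ne
    fin_cases s <;> fin_cases t <;> simp_all [eq_comm]
  · intro s t
    fin_cases s <;> fin_cases t <;> simp [P2P3, *, G.adj_comm]

def attached (G : SimpleGraph V) (p q r s : V) : Set V :=
  {x | G.Adj x p ∧ G.Adj x q ∧ ¬G.Adj x r ∧ ¬G.Adj x s ∧ x ≠ r ∧ x ≠ s}

theorem isIndepSet_attached_union (h₁ : _root_.Free twoP2 G) (h₂ : _root_.Free P2P3ᶜ G)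
    (hab : G.Adj a b) (hbc : G.Adj b c) (hcd : G.Adj c d) (hac : ¬G.Adj a c) (hac' : a ≠ c) :
    G.IsIndepSet (attached G a b c d ∪ attached G a c b d) := by
  have cross : ∀ x ∈ attached G a b c d, ∀ y ∈ attached G a c b d, ¬G.Adj x y := by
    rintro x ⟨hxa, hxb, hxc, -, hxc', -⟩ y ⟨hya, hyc, hyb, -, hyb', -⟩ hxy
    exact h₂.false_of_compl_P2P3 hyb hxc (fun h => hac h.symm) hxy.symm hyc hya hxb.symm hbc
      hab.symm hxa hyb' hxc' (Ne.symm hac')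
  rintro x (hx | hx) y (hy | hy) - hxy
  · obtain ⟨-, -, hxc, hxd, hxc', hxd'⟩ := hx
    obtain ⟨-, -, hyc, hyd, hyc', hyd'⟩ := hy
    exact h₁.false_of_twoP2 hxy hcd hxc hxd hyc hyd hxc' hxd' hyc' hyd'
  · exact cross x hx y hy hxy
  · exact cross y hy x hx hxy.symm
  · obtain ⟨hxa, hxc, hxb, -, hxb', -⟩ := hx
    obtain ⟨hya, hyc, hyb, -, hyb', -⟩ := hy
    exact h₂.false_of_compl_P2P3 hac hxb (fun h => hyb h.symm) hxa.symm hab hya.symm hxc.symm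
      hbc.symm hyc.symm hxy hac' hxb' (Ne.symm hyb')

lemma vSet_subset_attached {v : Fin 4 → V} {S : Set (Fin 4)} {p q r s : Fin 4}
    (hp : p ∈ S) (hq : q ∈ S) (hr : r ∉ S) (hs : s ∉ S) :
    vSet G v S ⊆ attached G (v p) (v q) (v r) (v s) :=
  fun _ ⟨hne, hadj⟩ => ⟨(hadj p).2 hp, (hadj q).2 hq, mt (hadj r).1 hr, mt (hadj s).1 hs,
    hne r, hne s⟩

end

theorem clm_C4_V12_V13_indep_general {V : Type*} (G : SimpleGraph V)
    (hfree1 : _root_.Free twoP2 G) (hfree2 : _root_.Free (P2P3ᶜ) G)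
    (v : Fin 4 → V) (hv : Function.Injective v)
    (hC : ∀ i j : Fin 4, G.Adj (v i) (v j) ↔ (j = i + 1 ∨ i = j + 1)) :
    ∀ i : Fin 4,
      (∀ x ∈ vSet G v {i, i + 1} ∪ vSet G v {i, i + 2},
        ∀ y ∈ vSet G v {i, i + 1} ∪ vSet G v {i, i + 2}, x ≠ y → ¬ G.Adj x y) ∧
      (∀ x ∈ vSet G v {i, i + 1} ∪ vSet G v {i + 1, i + 3},
        ∀ y ∈ vSet G v {i, i + 1} ∪ vSet G v {i + 1, i + 3}, x ≠ y → ¬ G.Adj x y) := by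
  intro i
  constructor
  · refine Set.Pairwise.mono (Set.union_subset_union (vSet_subset_attached ?_ ?_ ?_ ?_)
      (vSet_subset_attached ?_ ?_ ?_ ?_)) (isIndepSet_attached_union hfree1 hfree2
        (a := v i) (b := v (i + 1)) (c := v (i + 2)) (d := v (i + 3)) ?_ ?_ ?_ ?_ (hv.ne ?_))
    all_goals grind
  · refine Set.Pairwise.mono (Set.union_subset_union (vSet_subset_attached ?_ ?_ ?_ ?_)
      (vSet_subset_attached ?_ ?_ ?_ ?_)) (isIndepSet_attached_union hfree1 hfree2
        (a := v (i + 1)) (b := v i) (c := v (i + 3)) (d := v (i + 2)) ?_ ?_ ?_ ?_ (hv.ne ?_))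
    all_goals grind

theorem clm_C4_V12_V13_indep {V : Type*} [Fintype V] (G : SimpleGraph V)
    (hfree1 : _root_.Free twoP2 G) (hfree2 : _root_.Free (P2P3ᶜ) G) (hfree3 : _root_.Free C5 G)
    (hatom : NoCliqueCutset G)
    (v : Fin 4 → V) (hv : Function.Injective v)
    (hC : ∀ i j : Fin 4, G.Adj (v i) (v j) ↔ (j = i + 1 ∨ i = j + 1)) :
    ∀ i : Fin 4,
      (∀ x ∈ vSet G v {i, i + 1} ∪ vSet G v {i, i + 2},
        ∀ y ∈ vSet G v {i, i + 1} ∪ vSet G v {i, i + 2}, x ≠ y → ¬ G.Adj x y) ∧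
      (∀ x ∈ vSet G v {i, i + 1} ∪ vSet G v {i + 1, i + 3},
        ∀ y ∈ vSet G v {i, i + 1} ∪ vSet G v {i + 1, i + 3}, x ≠ y → ¬ G.Adj x y) :=
  clm_C4_V12_V13_indep_general G hfree1 hfree2 v hv hC
end

section
/- Let G be a (2P_2, \overline{P_2+P_3})-free, C_5-free atom containing an induced 4-cycle on vertices v_1,…,v_4. Then the subgraph of G induced by V_{{1,2,3,4}} is (P_1+P_2)-free; that is, there are no three distinct vertices x, y, y' ∈ V_{{1,2,3,4}} such that y is adjacent to y' and x is adjacent to neither y nor y'. -/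
open SimpleGraph

/-- `\overline{P₂ + P₃}` is the join of the non-edge `a b` with the induced `P₁ + P₂` on `x, y, y'`. -/
theorem not_free_compl_P2P3_of_commonNeighbors {V : Type*} {G : SimpleGraph V} {a b x y y' : V}
    (hab : a ≠ b) (hnab : ¬ G.Adj a b) (hx : x ∈ G.commonNeighbors a b)
    (hy : y ∈ G.commonNeighbors a b) (hy' : y' ∈ G.commonNeighbors a b) (hyy' : G.Adj y y')
    (hxy : ¬ G.Adj x y) (hxy' : ¬ G.Adj x y') : ¬ _root_.Free (P2P3ᶜ) G := by
  rw [mem_commonNeighbors] at hx hy hy'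
  let f : Fin 5 → V := ![a, b, y, x, y']
  have hf : ∀ i j, G.Adj (f i) (f j) ↔ (P2P3ᶜ).Adj i j := by
    intro i j
    fin_cases i <;> fin_cases j <;> simp [f, P2P3, G.adj_comm, *]
  have hinj : Function.Injective f := by
    intro i j hij
    fin_cases i <;> fin_cases j <;> simp_all [f, G.adj_comm]
  exact fun hfree => hfree.elim ⟨⟨f, hinj⟩, hf _ _⟩

theorem clm_C4_V1234_P1P2_free_general {V : Type*} (G : SimpleGraph V)
    (hfree2 : _root_.Free (P2P3ᶜ) G)
    (v : Fin 4 → V) (hv : Function.Injective v)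
    (hC : ∀ i j : Fin 4, G.Adj (v i) (v j) ↔ (j = i + 1 ∨ i = j + 1)) :
    ¬ ∃ x y y' : V, x ∈ vSet G v (Set.univ : Set (Fin 4)) ∧
      y ∈ vSet G v (Set.univ : Set (Fin 4)) ∧ y' ∈ vSet G v (Set.univ : Set (Fin 4)) ∧
      x ≠ y ∧ x ≠ y' ∧ y ≠ y' ∧ G.Adj y y' ∧ ¬ G.Adj x y ∧ ¬ G.Adj x y' := by
  rintro ⟨x, y, y', hx, hy, hy', -, -, -, hyy', hxy, hxy'⟩
  have hcommon : ∀ z ∈ vSet G v Set.univ, z ∈ G.commonNeighbors (v 0) (v 2) := fun z hz =>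
    G.mem_commonNeighbors.2 ⟨((hz.2 0).2 trivial).symm, ((hz.2 2).2 trivial).symm⟩
  have hnadj : ¬ G.Adj (v 0) (v 2) := by simp [hC]
  exact not_free_compl_P2P3_of_commonNeighbors (hv.ne (by decide)) hnadj (hcommon x hx)
    (hcommon y hy) (hcommon y' hy') hyy' hxy hxy' hfree2

theorem clm_C4_V1234_P1P2_free {V : Type*} [Fintype V] (G : SimpleGraph V)
    (hfree1 : _root_.Free twoP2 G) (hfree2 : _root_.Free (P2P3ᶜ) G) (hfree3 : _root_.Free C5 G)
    (hatom : NoCliqueCutset G)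
    (v : Fin 4 → V) (hv : Function.Injective v)
    (hC : ∀ i j : Fin 4, G.Adj (v i) (v j) ↔ (j = i + 1 ∨ i = j + 1)) :
    ¬ ∃ x y y' : V, x ∈ vSet G v (Set.univ : Set (Fin 4)) ∧
      y ∈ vSet G v (Set.univ : Set (Fin 4)) ∧ y' ∈ vSet G v (Set.univ : Set (Fin 4)) ∧
      x ≠ y ∧ x ≠ y' ∧ y ≠ y' ∧ G.Adj y y' ∧ ¬ G.Adj x y ∧ ¬ G.Adj x y' :=
  clm_C4_V1234_P1P2_free_general G hfree2 v hv hC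
end

section
/- Let G be a (2P_2, \overline{P_2+P_3})-free, C_5-free atom containing an induced 4-cycle on vertices v_1,…,v_4. Then for i ∈ {1,2}, every vertex of V_{{i,i+2}} is adjacent to every vertex of V_{{1,2,3,4}}. -/
open SimpleGraph

theorem Free.not_isInducedCopy {W V : Type*} {H : SimpleGraph W} {G : SimpleGraph V}
    (h : _root_.Free H G) {f : W → V} (hf : Function.Injective f)
    (hadj : ∀ a b, G.Adj (f a) (f b) ↔ H.Adj a b) : False :=
  h.false ⟨⟨f, hf⟩, hadj _ _⟩

theorem Free.adj_of_compl_P2P3 {V : Type*} {G : SimpleGraph V} (h : _root_.Free P2P3ᶜ G)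
    {a b c x y : V} (hac : a ≠ c) (hab : G.Adj a b) (hbc : G.Adj b c) (hnac : ¬ G.Adj a c)
    (hxa : G.Adj x a) (hxc : G.Adj x c) (hxb : ¬ G.Adj x b)
    (hya : G.Adj y a) (hyb : G.Adj y b) (hyc : G.Adj y c) : G.Adj x y := by
  by_contra hxy
  have hxy' : x ≠ y := by rintro rfl; exact hxb hyb
  have hxb' : x ≠ b := by rintro rfl; exact hxy hyb.symm
  -- `{a, c, y, x, b}` would induce the complement of `P₂ + P₃`: its non-edges are `ac`, `yx`, `xb`
  refine h.not_isInducedCopy (f := ![a, c, y, x, b]) ?_ ?_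
  · intro p q hpq
    fin_cases p <;> fin_cases q <;> simp_all
  · intro p q
    fin_cases p <;> fin_cases q <;> simp_all [P2P3, G.adj_comm]

theorem clm_C4_V13_V1234_complete_general {V : Type*} (G : SimpleGraph V)
    (hfree2 : _root_.Free (P2P3ᶜ) G)
    (v : Fin 4 → V) (hv : Function.Injective v)
    (hC : ∀ i j : Fin 4, G.Adj (v i) (v j) ↔ (j = i + 1 ∨ i = j + 1)) :
    ∀ i : Fin 4, ∀ x ∈ vSet G v {i, i + 2},
      ∀ y ∈ vSet G v (Set.univ : Set (Fin 4)), G.Adj x y := by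
  intro i x ⟨_, hx⟩ y ⟨_, hy⟩
  have hx_succ : ¬ G.Adj x (v (i + 1)) := by
    simp only [hx, Set.mem_insert_iff, Set.mem_singleton_iff]
    omega
  exact hfree2.adj_of_compl_P2P3 (a := v i) (b := v (i + 1)) (c := v (i + 2))
    (hv.ne (by omega)) ((hC _ _).2 (by omega)) ((hC _ _).2 (by omega)) (by rw [hC]; omega)
    ((hx _).2 (by simp)) ((hx _).2 (by simp)) hx_succ
    ((hy _).2 trivial) ((hy _).2 trivial) ((hy _).2 trivial)

theorem clm_C4_V13_V1234_complete {V : Type*} [Fintype V] (G : SimpleGraph V)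
    (hfree1 : _root_.Free twoP2 G) (hfree2 : _root_.Free (P2P3ᶜ) G) (hfree3 : _root_.Free C5 G)
    (hatom : NoCliqueCutset G)
    (v : Fin 4 → V) (hv : Function.Injective v)
    (hC : ∀ i j : Fin 4, G.Adj (v i) (v j) ↔ (j = i + 1 ∨ i = j + 1)) :
    ∀ i : Fin 4, ∀ x ∈ vSet G v {i, i + 2},
      ∀ y ∈ vSet G v (Set.univ : Set (Fin 4)), G.Adj x y :=
  clm_C4_V13_V1234_complete_general G hfree2 v hv hC
end

section
/- Let G be a (2P_2, \overline{P_2+P_3})-free, C_5-free atom containing an induced 4-cycle on vertices v_1,…,v_4. Then for every i ∈ {1,…,4} (indices modulo 4), at least one of the sets V_{{i-1}} ∪ V_{{i-1,i}} and V_{{i,i+1}} ∪ V_{{i+1}} is empty. -/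
/-!
A vertex `x ∈ V_{i-1} ∪ V_{i-1,i}` sees `v_{i-1}` but neither `v_{i+1}` nor `v_{i+2}`, and
symmetrically `y ∈ V_{i,i+1} ∪ V_{i+1}` sees `v_{i+1}` but neither `v_{i-1}` nor `v_{i+2}`.
By `2P₂`-freeness the edges `x v_{i-1}` and `y v_{i+1}` are joined by an edge, which can only be
`xy`; but then `x v_{i-1} v_{i+2} v_{i+1} y` is an induced `C₅`.
-/

open SimpleGraph

/-- A map reflecting and preserving adjacency out of a graph whose vertices have pairwise distinct
neighbourhoods is injective, hence an induced embedding. -/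
theorem Free.false_of_adj_iff_s13 {W V : Type*} {H : SimpleGraph W} {G : SimpleGraph V}
    (hG : _root_.Free H G) (hH : ∀ p q, (∀ r, H.Adj p r ↔ H.Adj q r) → p = q)
    (f : W → V) (hf : ∀ p q, G.Adj (f p) (f q) ↔ H.Adj p q) : False :=
  hG.false ⟨⟨f, fun p q hpq => hH p q fun r => by rw [← hf, ← hf, hpq]⟩, hf _ _⟩

section
variable {V : Type*} {G : SimpleGraph V}

theorem Free.adj_of_twoP2 (h : _root_.Free twoP2 G) {a b c d : V} (hab : G.Adj a b)
    (hcd : G.Adj c d) : G.Adj a c ∨ G.Adj a d ∨ G.Adj b c ∨ G.Adj b d := by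
  by_contra! ⟨hac, had, hbc, hbd⟩
  refine h.false_of_adj_iff_s13 (by unfold twoP2; decide) ![a, b, c, d] fun p q => ?_
  fin_cases p <;> fin_cases q <;>
    simp [twoP2, hab, hcd, hab.symm, hcd.symm, hac, had, hbc, hbd, G.adj_comm]

theorem Free.false_of_C5 (h : _root_.Free C5 G) {a b c d e : V} (hab : G.Adj a b)
    (hbc : G.Adj b c) (hcd : G.Adj c d) (hde : G.Adj d e) (hea : G.Adj e a)
    (hac : ¬G.Adj a c) (had : ¬G.Adj a d)
    (hbd : ¬G.Adj b d) (hbe : ¬G.Adj b e) (hce : ¬G.Adj c e) : False := by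
  refine h.false_of_adj_iff_s13 (by unfold C5; decide) ![a, b, c, d, e] fun p q => ?_
  fin_cases p <;> fin_cases q <;>
    simp [C5, hab, hbc, hcd, hde, hea, hea.symm, hac, had, hbd, hbe, hce, G.adj_comm]

theorem false_of_P3_with_private_neighbours (h2P2 : _root_.Free twoP2 G) (hC5 : _root_.Free C5 G)
    {a d c x y : V} (had : G.Adj a d) (hdc : G.Adj d c) (hac : ¬G.Adj a c)
    (hxa : G.Adj x a) (hxd : ¬G.Adj x d) (hxc : ¬G.Adj x c)
    (hyc : G.Adj y c) (hyd : ¬G.Adj y d) (hya : ¬G.Adj y a) : False := by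
  have hxy : G.Adj x y := by
    rcases h2P2.adj_of_twoP2 hxa hyc with h | h | h | h
    exacts [h, (hxc h).elim, (hya h.symm).elim, (hac h).elim]
  exact hC5.false_of_C5 hxa had hdc hyc.symm hxy.symm hxd hxc hac (hya ·.symm) (hyd ·.symm)

end

theorem clm_C4_V1_V12_or_V23_V3_empty_general {V : Type*} (G : SimpleGraph V)
    (hfree1 : _root_.Free twoP2 G) (hfree3 : _root_.Free C5 G)
    (v : Fin 4 → V)
    (hC : ∀ i j : Fin 4, G.Adj (v i) (v j) ↔ (j = i + 1 ∨ i = j + 1)) :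
    ∀ i : Fin 4,
      vSet G v {i - 1} ∪ vSet G v {i - 1, i} = ∅ ∨
      vSet G v {i, i + 1} ∪ vSet G v {i + 1} = ∅ := by
  intro i
  by_contra! h
  obtain ⟨⟨x, hx⟩, ⟨y, hy⟩⟩ := h
  have hxN : G.Adj x (v (i - 1)) ∧ ¬G.Adj x (v (i + 2)) ∧ ¬G.Adj x (v (i + 1)) := by
    rcases hx with ⟨-, hx⟩ | ⟨-, hx⟩ <;>
      simp only [hx, Set.mem_singleton_iff, Set.mem_insert_iff] <;> fin_cases i <;> decide
  have hyN : G.Adj y (v (i + 1)) ∧ ¬G.Adj y (v (i + 2)) ∧ ¬G.Adj y (v (i - 1)) := by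
    rcases hy with ⟨-, hy⟩ | ⟨-, hy⟩ <;>
      simp only [hy, Set.mem_singleton_iff, Set.mem_insert_iff] <;> fin_cases i <;> decide
  have hP3 : G.Adj (v (i - 1)) (v (i + 2)) ∧ G.Adj (v (i + 2)) (v (i + 1)) ∧
      ¬G.Adj (v (i - 1)) (v (i + 1)) := by
    simp only [hC]; fin_cases i <;> decide
  exact false_of_P3_with_private_neighbours hfree1 hfree3 hP3.1 hP3.2.1 hP3.2.2
    hxN.1 hxN.2.1 hxN.2.2 hyN.1 hyN.2.1 hyN.2.2

theorem clm_C4_V1_V12_or_V23_V3_empty {V : Type*} [Fintype V] (G : SimpleGraph V)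
    (hfree1 : _root_.Free twoP2 G) (hfree2 : _root_.Free (P2P3ᶜ) G) (hfree3 : _root_.Free C5 G)
    (hatom : NoCliqueCutset G)
    (v : Fin 4 → V) (hv : Function.Injective v)
    (hC : ∀ i j : Fin 4, G.Adj (v i) (v j) ↔ (j = i + 1 ∨ i = j + 1)) :
    ∀ i : Fin 4,
      vSet G v {i - 1} ∪ vSet G v {i - 1, i} = ∅ ∨
      vSet G v {i, i + 1} ∪ vSet G v {i + 1} = ∅ :=
  clm_C4_V1_V12_or_V23_V3_empty_general G hfree1 hfree3 v hC
end

section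
/- Let G be a (2P_2, \overline{P_2+P_3})-free, C_5-free atom containing an induced 4-cycle on vertices v_1,…,v_4. Then for every i ∈ {1,…,4} (indices modulo 4), every vertex of V_{{i}} is adjacent to every vertex of V_{{1,2,3,4}}, and at most one vertex of V_{{i,i+2}} has a neighbour in V_{{i}}. -/
open SimpleGraph

/-!
Write the cycle as `a b c d` with `x ∈ V_{a}`. If `x` missed a vertex `y` complete to the
cycle, then excluding `2P₂`, `C₅` and the complement of `P₂ + P₃` forces every neighbour of
`x` other than `a` to see both `a` and `c`; two non-adjacent such neighbours would induce the
complement of `P₂ + P₃` with `a, c, x`. So `N(x)` would be a clique cut-set separating `x`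
from `y`. For the second claim, `V_{a,c}` and `V_{a}` are stable and two vertices of `V_{a,c}`
have no common neighbour in `V_{a}`; hence distinct `y, z ∈ V_{a,c}` with neighbours `x, w`
in `V_{a}` would make `yx, zw` an induced `2P₂`.
-/

section

variable {V : Type*} {G : SimpleGraph V}

theorem Free.not_twoP2 (hf : _root_.Free twoP2 G) {a b c d : V} (hab : G.Adj a b)
    (hcd : G.Adj c d) (hac : ¬G.Adj a c) (had : ¬G.Adj a d) (hbc : ¬G.Adj b c)
    (hbd : ¬G.Adj b d) : False := by
  refine hf.false ⟨⟨![a, b, c, d], fun i j h => ?_⟩, fun {i j} => ?_⟩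
  · fin_cases i <;> fin_cases j <;> simp_all [G.adj_comm]
  · show G.Adj (![a, b, c, d] i) (![a, b, c, d] j) ↔ _
    fin_cases i <;> fin_cases j <;> simp_all [twoP2, G.adj_comm]

theorem Free.not_C5 (hf : _root_.Free C5 G) {a b c d e : V} (hab : G.Adj a b)
    (hbc : G.Adj b c) (hcd : G.Adj c d) (hde : G.Adj d e) (hea : G.Adj e a)
    (hac : ¬G.Adj a c) (had : ¬G.Adj a d) (hbd : ¬G.Adj b d) (hbe : ¬G.Adj b e)
    (hce : ¬G.Adj c e) : False := by
  refine hf.false ⟨⟨![a, b, c, d, e], fun i j h => ?_⟩, fun {i j} => ?_⟩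
  · fin_cases i <;> fin_cases j <;> simp_all [G.adj_comm]
  · show G.Adj (![a, b, c, d, e] i) (![a, b, c, d, e] j) ↔ _
    fin_cases i <;> fin_cases j <;> simp_all [C5, G.adj_comm]

/-- The complement of `P₂ + P₃`: the non-adjacent pair `a, b` is complete to `c, d, e`,
which span the single edge `ce`. -/
theorem Free.not_compl_P2P3 (hf : _root_.Free P2P3ᶜ G) {a b c d e : V} (hne : a ≠ b)
    (hac : G.Adj a c) (had : G.Adj a d) (hae : G.Adj a e)
    (hbc : G.Adj b c) (hbd : G.Adj b d) (hbe : G.Adj b e) (hce : G.Adj c e)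
    (hab : ¬G.Adj a b) (hcd : ¬G.Adj c d) (hde : ¬G.Adj d e) : False := by
  refine hf.false ⟨⟨![a, b, c, d, e], fun i j h => ?_⟩, fun {i j} => ?_⟩
  · fin_cases i <;> fin_cases j <;> simp_all [G.adj_comm]
  · show G.Adj (![a, b, c, d, e] i) (![a, b, c, d, e] j) ↔ _
    fin_cases i <;> fin_cases j <;> simp_all [P2P3, G.adj_comm]

/-- Otherwise the neighbourhood of `x` is a clique cut-set separating `x` from `y`. -/
theorem NoCliqueCutset.adj_of_isClique_neighborSet (h : NoCliqueCutset G) {x y : V}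
    (hx : G.IsClique (G.neighborSet x)) (hxy : x ≠ y) : G.Adj x y := by
  by_contra hxy'
  obtain ⟨w⟩ := h _ hx ⟨x, G.loopless.irrefl x⟩ ⟨y, hxy'⟩
  have hnil : ¬w.Nil := Walk.not_nil_of_ne (hxy <| congrArg Subtype.val ·)
  exact (w.getVert 1).2 (w.adj_snd hnil)

theorem adj_of_adj_of_not_adj_dominating (hf1 : _root_.Free twoP2 G) (hf2 : _root_.Free P2P3ᶜ G)
    (hf3 : _root_.Free C5 G) {a b c x y p : V} (hab : G.Adj a b) (hbc : G.Adj b c)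
    (hac : ¬G.Adj a c) (hxa : G.Adj x a) (hxb : ¬G.Adj x b) (hxc : ¬G.Adj x c)
    (hya : G.Adj y a) (hyb : G.Adj y b) (hyc : G.Adj y c) (hxy : ¬G.Adj x y)
    (hxp : G.Adj x p) (hpa : p ≠ a) : G.Adj p a := by
  by_contra hpa'
  have hpb : G.Adj p b := by
    by_contra hpb
    by_cases hpc : G.Adj p c
    · exact hf3.not_C5 hab hbc hpc.symm hxp.symm hxa hac (hpa' ·.symm) (hpb ·.symm)
        (hxb ·.symm) (hxc ·.symm)
    · exact hf1.not_twoP2 hbc hxp (hxb ·.symm) (hpb ·.symm) (hxc ·.symm) (hpc ·.symm)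
  have hpy : ¬G.Adj p y := fun hpy =>
    hf2.not_compl_P2P3 hpa.symm hab hxa.symm hya.symm hpb hxp.symm hpy hyb.symm (hpa' ·.symm)
      (hxb ·.symm) hxy
  by_cases hpc : G.Adj p c
  · exact hf3.not_C5 hxa.symm hxp hpc hyc.symm hya (hpa' ·.symm) hac hxc hxy hpy
  · exact hf1.not_twoP2 hyc.symm hxp (hxc ·.symm) (hpc ·.symm) (hxy ·.symm) (hpy ·.symm)

theorem not_adj_of_adj_ends_of_not_adj_middle (hf : _root_.Free P2P3ᶜ G) {a b c y z : V}
    (hab : G.Adj a b) (hbc : G.Adj b c) (hac : ¬G.Adj a c) (hne : a ≠ c)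
    (hya : G.Adj y a) (hyb : ¬G.Adj y b) (hyc : G.Adj y c)
    (hza : G.Adj z a) (hzb : ¬G.Adj z b) (hzc : G.Adj z c) : ¬G.Adj y z := fun hyz =>
  hf.not_compl_P2P3 hne hya.symm hab hza.symm hyc.symm hbc.symm hzc.symm hyz hac hyb (hzb ·.symm)

theorem not_adj_of_adj_of_common_ends (hf : _root_.Free P2P3ᶜ G) {a c x y z : V}
    (hac : ¬G.Adj a c) (hne : y ≠ z) (hyz : ¬G.Adj y z)
    (hya : G.Adj y a) (hyc : G.Adj y c) (hza : G.Adj z a) (hzc : G.Adj z c)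
    (hxa : G.Adj x a) (hxc : ¬G.Adj x c) (hyx : G.Adj y x) : ¬G.Adj z x := fun hzx =>
  hf.not_compl_P2P3 hne hya hyc hyx hza hzc hzx hxa.symm hyz hac (hxc ·.symm)

structure IsInducedC4 (G : SimpleGraph V) (a b c d : V) : Prop where
  adj_ab : G.Adj a b
  adj_bc : G.Adj b c
  adj_cd : G.Adj c d
  adj_da : G.Adj d a
  not_adj_ac : ¬G.Adj a c
  not_adj_bd : ¬G.Adj b d
  ne_ac : a ≠ c
  ne_bd : b ≠ d

theorem IsInducedC4.adj_opposite_of_adj {a b c d : V} (hC : IsInducedC4 G a b c d)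
    (hf1 : _root_.Free twoP2 G) (hf2 : _root_.Free P2P3ᶜ G) {x p : V} (hxb : ¬G.Adj x b)
    (hxc : ¬G.Adj x c) (hxd : ¬G.Adj x d) (hxp : G.Adj x p) (hpa : G.Adj p a) :
    G.Adj p c := by
  by_contra hpc
  have hpb : G.Adj p b := by
    by_contra hpb
    exact hf1.not_twoP2 hC.adj_bc hxp (hxb ·.symm) (hpb ·.symm) (hxc ·.symm) (hpc ·.symm)
  have hpd : G.Adj p d := by
    by_contra hpd
    exact hf1.not_twoP2 hC.adj_cd hxp (hxc ·.symm) (hpc ·.symm) (hxd ·.symm) (hpd ·.symm)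
  exact hf2.not_compl_P2P3 hC.ne_bd hC.adj_ab.symm hC.adj_bc hpb.symm hC.adj_da hC.adj_cd.symm
    hpd.symm hpa.symm hC.not_adj_bd hC.not_adj_ac (hpc ·.symm)

theorem IsInducedC4.isClique_neighborSet {a b c d : V} (hC : IsInducedC4 G a b c d)
    (hf1 : _root_.Free twoP2 G) (hf2 : _root_.Free P2P3ᶜ G) (hf3 : _root_.Free C5 G)
    {x y : V} (hxa : G.Adj x a) (hxb : ¬G.Adj x b) (hxc : ¬G.Adj x c) (hxd : ¬G.Adj x d)
    (hya : G.Adj y a) (hyb : G.Adj y b) (hyc : G.Adj y c) (hxy : ¬G.Adj x y) :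
    G.IsClique (G.neighborSet x) := by
  have hadj : ∀ p, G.Adj x p → p ≠ a → G.Adj p a ∧ G.Adj p c := fun p hxp hpa =>
    have hpa' := adj_of_adj_of_not_adj_dominating hf1 hf2 hf3 hC.adj_ab hC.adj_bc
      hC.not_adj_ac hxa hxb hxc hya hyb hyc hxy hxp hpa
    ⟨hpa', hC.adj_opposite_of_adj hf1 hf2 hxb hxc hxd hxp hpa'⟩
  intro p hxp q hxq hpq
  by_contra hpq'
  obtain rfl | hpa := eq_or_ne p a
  · exact hpq' (hadj q hxq hpq.symm).1.symm
  obtain rfl | hqa := eq_or_ne q a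
  · exact hpq' (hadj p hxp hpa).1
  obtain ⟨hpa', hpc⟩ := hadj p hxp hpa
  obtain ⟨hqa', hqc⟩ := hadj q hxq hqa
  exact hf2.not_compl_P2P3 hpq hpa' hpc hxp.symm hqa' hqc hxq.symm hxa.symm hpq' hC.not_adj_ac
    (hxc ·.symm)

theorem IsInducedC4.eq_of_adj_of_adj {a b c d : V} (hC : IsInducedC4 G a b c d)
    (hf1 : _root_.Free twoP2 G) (hf2 : _root_.Free P2P3ᶜ G) {x y z w : V}
    (hya : G.Adj y a) (hyb : ¬G.Adj y b) (hyc : G.Adj y c)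
    (hza : G.Adj z a) (hzb : ¬G.Adj z b) (hzc : G.Adj z c)
    (hxa : G.Adj x a) (hxb : ¬G.Adj x b) (hxc : ¬G.Adj x c)
    (hwa : G.Adj w a) (hwb : ¬G.Adj w b) (hwc : ¬G.Adj w c)
    (hyx : G.Adj y x) (hzw : G.Adj z w) : y = z := by
  by_contra hne
  have hyz : ¬G.Adj y z := not_adj_of_adj_ends_of_not_adj_middle hf2 hC.adj_ab hC.adj_bc
    hC.not_adj_ac hC.ne_ac hya hyb hyc hza hzb hzc
  have hzx : ¬G.Adj z x :=
    not_adj_of_adj_of_common_ends hf2 hC.not_adj_ac hne hyz hya hyc hza hzc hxa hxc hyx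
  have hyw : ¬G.Adj y w := not_adj_of_adj_of_common_ends hf2 hC.not_adj_ac (Ne.symm hne)
    (hyz ·.symm) hza hzc hya hyc hwa hwc hzw
  have hxw : ¬G.Adj x w := fun hxw =>
    hf1.not_twoP2 hC.adj_bc hxw (hxb ·.symm) (hwb ·.symm) (hxc ·.symm) (hwc ·.symm)
  exact hf1.not_twoP2 hyx hzw hyz hyw (hzx ·.symm) hxw

theorem isInducedC4_of_cycle {v : Fin 4 → V} (hv : Function.Injective v)
    (hC : ∀ i j : Fin 4, G.Adj (v i) (v j) ↔ (j = i + 1 ∨ i = j + 1)) (i : Fin 4) :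
    IsInducedC4 G (v i) (v (i + 1)) (v (i + 2)) (v (i + 3)) := by
  refine ⟨(hC _ _).2 ?_, (hC _ _).2 ?_, (hC _ _).2 ?_, (hC _ _).2 ?_, (hC _ _).not.2 ?_,
    (hC _ _).not.2 ?_, hv.ne ?_, hv.ne ?_⟩ <;> revert i <;> decide

theorem adj_of_mem_vSet_singleton {v : Fin 4 → V} {i : Fin 4} {x : V}
    (hx : x ∈ vSet G v {i}) :
    G.Adj x (v i) ∧ ¬G.Adj x (v (i + 1)) ∧ ¬G.Adj x (v (i + 2)) ∧ ¬G.Adj x (v (i + 3)) := by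
  simp [hx.2]

theorem adj_of_mem_vSet_pair {v : Fin 4 → V} {i : Fin 4} {y : V}
    (hy : y ∈ vSet G v {i, i + 2}) :
    G.Adj y (v i) ∧ ¬G.Adj y (v (i + 1)) ∧ G.Adj y (v (i + 2)) := by
  simp [hy.2]

end

theorem clm_C4_V1_complete_and_one_V13_nbr_general {V : Type*} (G : SimpleGraph V)
    (hfree1 : _root_.Free twoP2 G) (hfree2 : _root_.Free (P2P3ᶜ) G) (hfree3 : _root_.Free C5 G)
    (hatom : NoCliqueCutset G)
    (v : Fin 4 → V) (hv : Function.Injective v)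
    (hC : ∀ i j : Fin 4, G.Adj (v i) (v j) ↔ (j = i + 1 ∨ i = j + 1)) :
    ∀ i : Fin 4,
      (∀ x ∈ vSet G v {i}, ∀ y ∈ vSet G v (Set.univ : Set (Fin 4)), G.Adj x y) ∧
      (∀ y ∈ vSet G v {i, i + 2}, ∀ y' ∈ vSet G v {i, i + 2},
        (∃ x ∈ vSet G v {i}, G.Adj y x) → (∃ x ∈ vSet G v {i}, G.Adj y' x) → y = y') := by
  intro i
  have hC4 := isInducedC4_of_cycle hv hC i
  refine ⟨fun x hx y hy => ?_, fun y hy z hz ⟨x, hx, hyx⟩ ⟨w, hw, hzw⟩ => ?_⟩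
  · obtain ⟨hxa, hxb, hxc, hxd⟩ := adj_of_mem_vSet_singleton hx
    have hy' : ∀ j, G.Adj y (v j) := fun j => (hy.2 j).2 trivial
    by_contra hxy
    exact hxy <| hatom.adj_of_isClique_neighborSet
      (hC4.isClique_neighborSet hfree1 hfree2 hfree3 hxa hxb hxc hxd (hy' _) (hy' _) (hy' _)
        hxy)
      (fun h => hxb (h ▸ hy' _))
  · obtain ⟨hya, hyb, hyc⟩ := adj_of_mem_vSet_pair hy
    obtain ⟨hza, hzb, hzc⟩ := adj_of_mem_vSet_pair hz
    obtain ⟨hxa, hxb, hxc, -⟩ := adj_of_mem_vSet_singleton hx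
    obtain ⟨hwa, hwb, hwc, -⟩ := adj_of_mem_vSet_singleton hw
    exact hC4.eq_of_adj_of_adj hfree1 hfree2 hya hyb hyc hza hzb hzc hxa hxb hxc hwa hwb hwc
      hyx hzw

theorem clm_C4_V1_complete_and_one_V13_nbr {V : Type*} [Fintype V] (G : SimpleGraph V)
    (hfree1 : _root_.Free twoP2 G) (hfree2 : _root_.Free (P2P3ᶜ) G) (hfree3 : _root_.Free C5 G)
    (hatom : NoCliqueCutset G)
    (v : Fin 4 → V) (hv : Function.Injective v)
    (hC : ∀ i j : Fin 4, G.Adj (v i) (v j) ↔ (j = i + 1 ∨ i = j + 1)) :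
    ∀ i : Fin 4,
      (∀ x ∈ vSet G v {i}, ∀ y ∈ vSet G v (Set.univ : Set (Fin 4)), G.Adj x y) ∧
      (∀ y ∈ vSet G v {i, i + 2}, ∀ y' ∈ vSet G v {i, i + 2},
        (∃ x ∈ vSet G v {i}, G.Adj y x) → (∃ x ∈ vSet G v {i}, G.Adj y' x) → y = y') :=
  clm_C4_V1_complete_and_one_V13_nbr_general G hfree1 hfree2 hfree3 hatom v hv hC
end
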